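/- Let r ≥ 2 and M be integers, and define integers n_r, n_{r-1}, …, n_1 by the downward recursion n_r = ⌊M/r⌋ and n_i = ⌊(M − (n_{i+1} + ⋯ + n_r))/i⌋ for 1 ≤ i < r. Then the sequence is nonincreasing in the index: n_i ≤ n_j whenever 1 ≤ j ≤ i ≤ r. -/

import Mathlib

/-- The sequence defined by the downward recursion
`n_r = ⌊M/r⌋`, `n_i = ⌊(M − (n_{i+1} + ⋯ + n_r))/i⌋` is nonincreasing
in the index: `n_i ≤ n_j` whenever `1 ≤ j ≤ i ≤ r`. -/
theorem stmt_1 (r M : ℤ) (hr : 2 ≤ r) (n : ℤ → ℤ)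
    (hnr : n r = ⌊(M : ℚ) / (r : ℚ)⌋)
    (hni : ∀ i : ℤ, 1 ≤ i → i < r →
      n i = ⌊((M : ℚ) - ∑ k ∈ Finset.Ioc i r, (n k : ℚ)) / (i : ℚ)⌋) :
    ∀ i j : ℤ, 1 ≤ j → j ≤ i → i ≤ r → n i ≤ n j := by
  set S : ℤ → ℚ := fun t => ∑ k ∈ Finset.Ioc t r, (n k : ℚ) with hS
  have hall : ∀ i : ℤ, 1 ≤ i → i ≤ r → n i = ⌊((M : ℚ) - S i) / (i : ℚ)⌋ := by
    intro i h1 h2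
    rcases eq_or_lt_of_le h2 with h | h
    · subst h
      have : S i = 0 := by simp [hS]
      rw [this, sub_zero, hnr]
    · exact hni i h1 h
  have key : ∀ i : ℤ, 1 ≤ i → i < r → n (i + 1) ≤ n i := by
    intro i h1 hir
    have hi1 : (1 : ℤ) ≤ i + 1 := by omega
    have hsplit : S i = (n (i + 1) : ℚ) + S (i + 1) := by
      have h : Finset.Ioc i r = insert (i + 1) (Finset.Ioc (i + 1) r) := by
        ext x
        simp only [Finset.mem_Ioc, Finset.mem_insert]
        omega
      simp only [hS, h]
      rw [Finset.sum_insert (by simp)]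
    have hq := hall (i + 1) hi1 (by omega)
    have hqle : (n (i + 1) : ℚ) ≤ ((M : ℚ) - S (i + 1)) / ((i : ℚ) + 1) := by
      rw [hq]
      push_cast
      exact Int.floor_le _
    have hipos : (0 : ℚ) < (i : ℚ) := by exact_mod_cast (by omega : (0:ℤ) < i)
    have hi1pos : (0 : ℚ) < (i : ℚ) + 1 := by linarith
    have hmul : (n (i + 1) : ℚ) * ((i : ℚ) + 1) ≤ (M : ℚ) - S (i + 1) := by
      exact (le_div_iff₀ hi1pos).mp hqle
    rw [hall i h1 (le_of_lt hir)]
    rw [Int.le_floor]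
    rw [le_div_iff₀ hipos]
    rw [hsplit]
    nlinarith [hmul]
  intro i j hj hji hir
  have : ∀ i : ℤ, j ≤ i → i ≤ r → n i ≤ n j := by
    intro i hji'
    refine Int.le_induction (motive := fun t _ => t ≤ r → n t ≤ n j) (m := j) ?_ ?_ i hji'
    · intro _; exact le_refl _
    · intro k hk ih hk1
      exact le_trans (key k (by omega) (by omega)) (ih (by omega))
  exact this i hji hir
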